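/- Let n ≥ 3 and let σ, τ ∈ S_n have McMahon codes s = s_1 s_2 … s_n and t = t_1 t_2 … t_n respectively (both subexcedant sequences). Suppose there is an index f with 2 ≤ f ≤ n−1 such that t_i = s_i for all i except t_f = s_f − 1 and t_{f+1} = s_{f+1} + 1. Then τ = σ·⟨α^{−1}(f+1), α^{−1}(s_f)⟩, where α = [[f−1, s_{f−1}]]·[[f−2, s_{f−2}]]·…·[[1, s_1]]. In particular, τ and σ differ by a single transposition. -/

import Mathlib

/-!
Raising `t (f+1)` by one and lowering `t f` by one changes only the two adjacent factors
`[[f+1, t (f+1)]] · [[f, t f]]` of the McMahon product, and these satisfy the local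
identity `[[f+1, c+1]] · [[f, d]] = [[f+1, c]] · [[f, d+1]] · ⟨f+1, d+1⟩`. Moving the
transposition to the right end of the product through `α = [[f-1, s (f-1)]] ⋯ [[1, s 1]]`
conjugates it into `⟨α⁻¹ (f+1), α⁻¹ (s f)⟩`; the factors above `f+1` are the same for both
codes.
-/

/-- `rot u k` is the permutation `[[u,k]]` of `{1,…,u} ⊆ ℕ` obtained by `k`
right circular shifts of the first `u` entries of the identity (positions are
1-based; all other natural numbers are fixed): `[[u,k]] i = u - k + i` for
`1 ≤ i ≤ k`, `[[u,k]] i = i - k` for `k < i ≤ u` and `[[u,k]] i = i` for `i > u`.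
It is (junk-)defined as the identity when `¬ k < u`. -/
def rot (u k : ℕ) : Equiv.Perm ℕ :=
  if _h : k < u then
    { toFun := fun i =>
        if 1 ≤ i ∧ i ≤ k then u - k + i
        else if k < i ∧ i ≤ u then i - k
        else i
      invFun := fun j =>
        if u - k + 1 ≤ j ∧ j ≤ u then j - (u - k)
        else if 1 ≤ j ∧ j ≤ u - k then j + k
        else j
      left_inv := by intro i; dsimp only; split_ifs <;> omega
      right_inv := by intro j; dsimp only; split_ifs <;> omega }
  else 1

/-- `psi n t = [[n, t n]] · [[n-1, t (n-1)]] · ⋯ · [[2, t 2]] · [[1, t 1]]`, where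
permutations act on indices, i.e. `(σ * τ) i = σ (τ i)`.  When `t` is a subexcedant
sequence of length `n`, `t` is called the McMahon code of the permutation `psi n t`. -/
def psi (n : ℕ) (t : ℕ → ℕ) : Equiv.Perm ℕ :=
  ((List.range n).reverse.map (fun i => rot (i + 1) (t (i + 1)))).prod

/-- `c` is a subexcedant sequence of length `n`: `0 ≤ c i ≤ i - 1` for `1 ≤ i ≤ n`
(positions are 1-based). -/
def Subexcedant (n : ℕ) (c : ℕ → ℕ) : Prop :=
  ∀ i, 1 ≤ i → i ≤ n → c i ≤ i - 1

/-- The major index of a permutation of `{1,…,n}`: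
`maj π = ∑_{1 ≤ i < n, π i > π (i+1)} i`. -/
def maj (n : ℕ) (π : Equiv.Perm ℕ) : ℕ :=
  ∑ i ∈ Finset.Ico 1 n, if π (i + 1) < π i then i else 0

lemma rot_apply {u k : ℕ} (h : k < u) (i : ℕ) :
    rot u k i = if 1 ≤ i ∧ i ≤ k then u - k + i
      else if k < i ∧ i ≤ u then i - k else i := by
  simp [rot, dif_pos h]

lemma rot_succ_mul_rot_eq_mul_swap {u c d : ℕ} (hc : c < u) (hd : d + 1 < u) :
    rot (u + 1) (c + 1) * rot u d =
      rot (u + 1) c * rot u (d + 1) * Equiv.swap (u + 1) (d + 1) := by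
  ext i
  simp only [Equiv.Perm.mul_apply, rot_apply (show c + 1 < u + 1 by omega),
    rot_apply (show d < u by omega), rot_apply (show c < u + 1 by omega), rot_apply hd]
  obtain rfl | rfl | ⟨hu, hd'⟩ : i = u + 1 ∨ i = d + 1 ∨ i ≠ u + 1 ∧ i ≠ d + 1 := by
    omega
  · simp only [Equiv.swap_apply_left]; split_ifs <;> omega
  · simp only [Equiv.swap_apply_right]; split_ifs <;> omega
  · simp only [Equiv.swap_apply_of_ne_of_ne hu hd']; split_ifs <;> omega

lemma psi_succ (m : ℕ) (t : ℕ → ℕ) :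
    psi (m + 1) t = rot (m + 1) (t (m + 1)) * psi m t := by
  simp [psi, List.range_succ, List.prod_cons]

lemma psi_congr {m : ℕ} {s t : ℕ → ℕ} (h : ∀ i, 1 ≤ i → i ≤ m → s i = t i) :
    psi m s = psi m t := by
  induction m with
  | zero => rfl
  | succ k ih =>
    rw [psi_succ, psi_succ, h (k + 1) (by omega) le_rfl,
      ih fun i h1 h2 => h i h1 (by omega)]

lemma psi_eq_mul_of_eq_above {k m : ℕ} {s t : ℕ → ℕ} {g : Equiv.Perm ℕ} (hkm : k ≤ m)
    (hk : psi k t = psi k s * g) (hst : ∀ i, k < i → i ≤ m → t i = s i) :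
    psi m t = psi m s * g := by
  induction m, hkm using Nat.le_induction with
  | base => exact hk
  | succ m hkm ih =>
    rw [psi_succ, psi_succ, hst (m + 1) (by omega) le_rfl,
      ih fun i h1 h2 => hst i h1 (by omega), mul_assoc]

theorem mcmahon_adjacent_transfer_general (n f : ℕ) (s t : ℕ → ℕ) (σ τ : Equiv.Perm ℕ)
    (hs : Subexcedant n s) (ht : Subexcedant n t)
    (hσ : σ = psi n s) (hτ : τ = psi n t)
    (hf1 : 2 ≤ f) (hf2 : f ≤ n - 1)
    (heq : ∀ i, i ≠ f → i ≠ f + 1 → t i = s i)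
    (hft : t f + 1 = s f) (hft1 : t (f + 1) = s (f + 1) + 1) :
    τ = σ * Equiv.swap ((psi (f - 1) s)⁻¹ (f + 1)) ((psi (f - 1) s)⁻¹ (s f)) := by
  obtain ⟨m, rfl⟩ : ∃ m, f = m + 1 := ⟨f - 1, by omega⟩
  rw [Nat.add_sub_cancel]
  have hd : t (m + 1) + 1 < m + 1 := by have := hs (m + 1) (by omega) (by omega); omega
  have hc : s (m + 1 + 1) < m + 1 := by have := ht (m + 1 + 1) (by omega) (by omega); omega
  have hα : psi m t = psi m s := psi_congr fun i _ hi => heq i (by omega) (by omega)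
  have htwo : psi (m + 1 + 1) t =
      psi (m + 1 + 1) s * Equiv.swap ((psi m s)⁻¹ (m + 1 + 1)) ((psi m s)⁻¹ (s (m + 1))) := by
    rw [psi_succ _ t, psi_succ _ t, hα, hft1, ← mul_assoc, rot_succ_mul_rot_eq_mul_swap hc hd,
      hft, psi_succ _ s, psi_succ _ s, Equiv.swap_apply_apply]
    group
  rw [hσ, hτ]
  exact psi_eq_mul_of_eq_above (by omega) htwo fun i hi _ => heq i (by omega) (by omega)

/-- if the McMahon codes `s`, `t` of `σ`, `τ ∈ S_n` (`n ≥ 3`) agree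
everywhere except that `t f = s f - 1` and `t (f+1) = s (f+1) + 1` for some
`2 ≤ f ≤ n-1`, then `τ = σ · ⟨α⁻¹ (f+1), α⁻¹ (s f)⟩` where
`α = [[f-1, s (f-1)]]·[[f-2, s (f-2)]]·…·[[1, s 1]] = psi (f-1) s`;
in particular `σ` and `τ` differ by a single transposition. -/
theorem mcmahon_adjacent_transfer (n f : ℕ) (s t : ℕ → ℕ) (σ τ : Equiv.Perm ℕ)
    (hn : 3 ≤ n) (hs : Subexcedant n s) (ht : Subexcedant n t)
    (hσ : σ = psi n s) (hτ : τ = psi n t)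
    (hf1 : 2 ≤ f) (hf2 : f ≤ n - 1)
    (heq : ∀ i, i ≠ f → i ≠ f + 1 → t i = s i)
    (hft : t f + 1 = s f) (hft1 : t (f + 1) = s (f + 1) + 1) :
    τ = σ * Equiv.swap ((psi (f - 1) s)⁻¹ (f + 1)) ((psi (f - 1) s)⁻¹ (s f)) :=
  mcmahon_adjacent_transfer_general n f s t σ τ hs ht hσ hτ hf1 hf2 heq hft hft1
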